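/- arXiv:2503.05657 — 2 statements merged into one kernel-verified Lean document; each statement's English description precedes it below -/
import Mathlib

section
/- Let Y be a random vector in ℝⁿ such that ‖σ(Y)‖² and ‖σ(−Y)‖² are integrable, where σ(x) = max(x,0) is applied componentwise, and suppose 𝔼|‖σ(Y)‖² − ‖σ(−Y)‖²| ≤ ε. Define S(ω) := sup { ‖σ(Y(ω)) − z‖² : z ∈ ℝⁿ, z ≥ 0 componentwise, ‖z‖ = ‖σ(Y(ω))‖ }. Then 𝔼‖σ(Y) − σ(−Y)‖² ≥ 𝔼[S] − ε. -/
/-! The pointwise bound `S ≤ 2 ‖σ(y)‖² ≤ ‖σ(y) - σ(-y)‖² + |‖σ(y)‖² - ‖σ(-y)‖²|` holds because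
nonnegative vectors have nonnegative inner product, while `σ(y)` and `σ(-y)` have disjoint
supports; integrating it gives the theorem. -/

open MeasureTheory

noncomputable def reluVec {n : ℕ} (y : EuclideanSpace ℝ (Fin n)) : EuclideanSpace ℝ (Fin n) :=
  WithLp.toLp 2 (fun i => max (y i) 0)

lemma norm_sub_sq_le_of_inner_nonneg {F : Type*} [NormedAddCommGroup F] [InnerProductSpace ℝ F]
    {x y : F} (h : 0 ≤ inner ℝ x y) : ‖x - y‖ ^ 2 ≤ ‖x‖ ^ 2 + ‖y‖ ^ 2 := by
  rw [norm_sub_sq_real]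
  linarith

lemma EuclideanSpace.inner_nonneg_of_nonneg {ι : Type*} [Fintype ι] {x y : EuclideanSpace ℝ ι}
    (hx : ∀ i, 0 ≤ x i) (hy : ∀ i, 0 ≤ y i) : 0 ≤ inner ℝ x y := by
  rw [PiLp.inner_apply]
  exact Finset.sum_nonneg fun i _ => mul_nonneg (hy i) (hx i)

/-- The paper's `S(y₀)` (for nonnegative `y₀`). -/
noncomputable def maxSqDistNonneg {ι : Type*} [Fintype ι] (a : EuclideanSpace ℝ ι) : ℝ :=
  sSup {d : ℝ | ∃ z : EuclideanSpace ℝ ι, (∀ i, 0 ≤ z i) ∧ ‖z‖ = ‖a‖ ∧ d = ‖a - z‖ ^ 2}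

section maxSqDistNonneg

variable {ι : Type*} [Fintype ι] {a : EuclideanSpace ℝ ι}

lemma maxSqDistNonneg_nonneg (a : EuclideanSpace ℝ ι) : 0 ≤ maxSqDistNonneg a :=
  Real.sSup_nonneg <| by
    rintro _ ⟨z, -, -, rfl⟩
    positivity

lemma maxSqDistNonneg_le (ha : ∀ i, 0 ≤ a i) : maxSqDistNonneg a ≤ 2 * ‖a‖ ^ 2 := by
  refine Real.sSup_le ?_ (by positivity)
  rintro _ ⟨z, hz, hza, rfl⟩
  calc ‖a - z‖ ^ 2 ≤ ‖a‖ ^ 2 + ‖z‖ ^ 2 :=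
        norm_sub_sq_le_of_inner_nonneg (EuclideanSpace.inner_nonneg_of_nonneg ha hz)
    _ = 2 * ‖a‖ ^ 2 := by rw [hza]; ring

end maxSqDistNonneg

section reluVec

variable {n : ℕ}

lemma reluVec_nonneg (y : EuclideanSpace ℝ (Fin n)) (i : Fin n) : 0 ≤ reluVec y i :=
  le_max_right _ _

lemma inner_reluVec_reluVec_neg (y : EuclideanSpace ℝ (Fin n)) :
    inner ℝ (reluVec y) (reluVec (-y)) = 0 := by
  rw [PiLp.inner_apply]
  refine Finset.sum_eq_zero fun i _ => ?_
  simp only [reluVec, RCLike.inner_apply, conj_trivial, PiLp.neg_apply, WithLp.ofLp_toLp]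
  rcases le_total (y i) 0 with hy | hy
  · rw [max_eq_right hy, mul_zero]
  · rw [max_eq_right (neg_nonpos_of_nonneg hy), zero_mul]

lemma norm_reluVec_sub_reluVec_neg_sq (y : EuclideanSpace ℝ (Fin n)) :
    ‖reluVec y - reluVec (-y)‖ ^ 2 = ‖reluVec y‖ ^ 2 + ‖reluVec (-y)‖ ^ 2 := by
  rw [norm_sub_sq_real, inner_reluVec_reluVec_neg]
  ring

lemma maxSqDistNonneg_reluVec_le (y : EuclideanSpace ℝ (Fin n)) :
    maxSqDistNonneg (reluVec y)
      ≤ ‖reluVec y - reluVec (-y)‖ ^ 2 + |‖reluVec y‖ ^ 2 - ‖reluVec (-y)‖ ^ 2| := by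
  rw [norm_reluVec_sub_reluVec_neg_sq]
  linarith [maxSqDistNonneg_le (reluVec_nonneg y),
    le_abs_self (‖reluVec y‖ ^ 2 - ‖reluVec (-y)‖ ^ 2)]

end reluVec

theorem negation_dominates_max_distance_general
    {Ω : Type*} [MeasurableSpace Ω] (P : Measure Ω)
    {n : ℕ} (Y : Ω → EuclideanSpace ℝ (Fin n))
    (ε : ℝ)
    (hint1 : Integrable (fun ω => ‖reluVec (Y ω)‖ ^ 2) P)
    (hint2 : Integrable (fun ω => ‖reluVec (-(Y ω))‖ ^ 2) P)
    (h1 : ∫ ω, |‖reluVec (Y ω)‖ ^ 2 - ‖reluVec (-(Y ω))‖ ^ 2| ∂P ≤ ε) :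
    ∫ ω, ‖reluVec (Y ω) - reluVec (-(Y ω))‖ ^ 2 ∂P
      ≥ (∫ ω, sSup {d : ℝ | ∃ z : EuclideanSpace ℝ (Fin n),
            (∀ i, 0 ≤ z i) ∧ ‖z‖ = ‖reluVec (Y ω)‖ ∧ d = ‖reluVec (Y ω) - z‖ ^ 2} ∂P) - ε := by
  change ∫ ω, maxSqDistNonneg (reluVec (Y ω)) ∂P - ε ≤ _
  have hdist : Integrable (fun ω => ‖reluVec (Y ω) - reluVec (-(Y ω))‖ ^ 2) P :=
    (hint1.add hint2).congr (ae_of_all _ fun ω => (norm_reluVec_sub_reluVec_neg_sq (Y ω)).symm)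
  have hgap : Integrable (fun ω => |‖reluVec (Y ω)‖ ^ 2 - ‖reluVec (-(Y ω))‖ ^ 2|) P :=
    (hint1.sub hint2).abs
  have hS : ∫ ω, maxSqDistNonneg (reluVec (Y ω)) ∂P
      ≤ ∫ ω, (‖reluVec (Y ω) - reluVec (-(Y ω))‖ ^ 2
          + |‖reluVec (Y ω)‖ ^ 2 - ‖reluVec (-(Y ω))‖ ^ 2|) ∂P :=
    integral_mono_of_nonneg (ae_of_all _ fun ω => maxSqDistNonneg_nonneg _) (hdist.add hgap)
      (ae_of_all _ fun ω => maxSqDistNonneg_reluVec_le (Y ω))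
  rw [integral_add hdist hgap] at hS
  linarith

/-- Appendix lemma behind Theorem 2: the expected squared distance between `σ(Y)` and `σ(−Y)`
dominates (up to `ε`) the expectation of the maximal squared distance from `σ(Y)` to
nonnegative vectors of equal norm. -/
theorem negation_dominates_max_distance
    {Ω : Type*} [MeasurableSpace Ω] (P : Measure Ω) [IsProbabilityMeasure P]
    {n : ℕ} (Y : Ω → EuclideanSpace ℝ (Fin n)) (hY : Measurable Y)
    (ε : ℝ) (hε : 0 ≤ ε)
    (hint1 : Integrable (fun ω => ‖reluVec (Y ω)‖ ^ 2) P)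
    (hint2 : Integrable (fun ω => ‖reluVec (-(Y ω))‖ ^ 2) P)
    (h1 : ∫ ω, |‖reluVec (Y ω)‖ ^ 2 - ‖reluVec (-(Y ω))‖ ^ 2| ∂P ≤ ε) :
    ∫ ω, ‖reluVec (Y ω) - reluVec (-(Y ω))‖ ^ 2 ∂P
      ≥ (∫ ω, sSup {d : ℝ | ∃ z : EuclideanSpace ℝ (Fin n),
            (∀ i, 0 ≤ z i) ∧ ‖z‖ = ‖reluVec (Y ω)‖ ∧ d = ‖reluVec (Y ω) - z‖ ^ 2} ∂P) - ε :=
  negation_dominates_max_distance_general P Y ε hint1 hint2 h1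
end

section
/- Let E be a real inner product space, let L : E → ℝ be continuously differentiable with gradient ∇L, let θ : [0,∞) → E solve the gradient flow θ'(t) = −∇L(θ(t)) for all t ≥ 0, and let δ : E → ℝ be Lipschitz with constant K. Then for every t ≥ 0, |δ(θ(t)) − δ(θ(0))| ≤ K · √(t · (L(θ(0)) − L(θ(t)))); in particular, |δ(θ(t)) − δ(θ(0))| ≤ K · √(t · (L(θ(0)) − infₛ L(θ(s)))) for all t, so the change in δ achievable by gradient-flow fine-tuning up to time t is bounded in terms of the available loss decrease. -/
/-!
Along a gradient flow the loss decreases at rate `‖∇L(θ s)‖²`, so `∫₀ᵗ ‖∇L(θ s)‖² ds` is exactly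
the loss decrease `L(θ 0) - L(θ t)`, while the distance travelled is at most `∫₀ᵗ ‖∇L(θ s)‖ ds`.
By Cauchy–Schwarz the latter is at most `√(t · (L(θ 0) - L(θ t)))`, and a `K`-Lipschitz `δ` moves
by at most `K` times the distance travelled.
-/

open intervalIntegral Set
open MeasureTheory (volume)

theorem HasGradientAt.comp_hasDerivAt {F : Type*} [NormedAddCommGroup F] [InnerProductSpace ℝ F]
    [CompleteSpace F] {f : F → ℝ} {g v : F} {γ : ℝ → F} {t : ℝ}
    (hf : HasGradientAt f g (γ t)) (hγ : HasDerivAt γ v t) :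
    HasDerivAt (f ∘ γ) (inner ℝ g v) t := by
  simpa using (hasGradientAt_iff_hasFDerivAt.mp hf).comp_hasDerivAt t hγ

theorem sq_intervalIntegral_le_mul_intervalIntegral_sq {f : ℝ → ℝ} {a b : ℝ} (hab : a ≤ b)
    (hf : IntervalIntegrable f volume a b) (hf2 : IntervalIntegrable (fun x => f x ^ 2) volume a b) :
    (∫ x in a..b, f x) ^ 2 ≤ (b - a) * ∫ x in a..b, f x ^ 2 := by
  set I := ∫ x in a..b, f x
  set J := ∫ x in a..b, f x ^ 2
  -- `∫ (f - c)² ≥ 0` for every `c`: a nonnegative quadratic in `c` has nonpositive discriminant.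
  have hquad : ∀ c : ℝ, 0 ≤ (b - a) * (c * c) + (-2 * I) * c + J := by
    intro c
    have hexpand : ∫ x in a..b, (f x - c) ^ 2 = (b - a) * (c * c) + (-2 * I) * c + J := by
      simp_rw [show ∀ x, (f x - c) ^ 2 = f x ^ 2 - 2 * c * f x + c ^ 2 from fun x => by ring]
      rw [integral_add (hf2.sub (hf.const_mul _)) intervalIntegrable_const,
        integral_sub hf2 (hf.const_mul _), integral_const_mul, integral_const,
        smul_eq_mul]
      ring
    rw [← hexpand]
    exact integral_nonneg hab fun x _ => sq_nonneg _
  have hdiscrim := discrim_le_zero hquad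
  rw [discrim] at hdiscrim
  linarith

theorem intervalIntegral_le_sqrt_mul_intervalIntegral_sq {f : ℝ → ℝ} {a b : ℝ} (hab : a ≤ b)
    (hf : IntervalIntegrable f volume a b) (hf2 : IntervalIntegrable (fun x => f x ^ 2) volume a b) :
    ∫ x in a..b, f x ≤ √((b - a) * ∫ x in a..b, f x ^ 2) :=
  (le_abs_self _).trans
    (Real.abs_le_sqrt (sq_intervalIntegral_le_mul_intervalIntegral_sq hab hf hf2))

section GradientFlow

variable {E : Type*} [NormedAddCommGroup E] [InnerProductSpace ℝ E] [CompleteSpace E]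
  {L : E → ℝ} {θ : ℝ → E} {a b : ℝ}

theorem ContDiff.continuous_gradient (hL : ContDiff ℝ 1 L) : Continuous (gradient L) :=
  (InnerProductSpace.toDual ℝ E).symm.continuous.comp (hL.continuous_fderiv one_ne_zero)

theorem continuousOn_gradient_comp_of_gradientFlow (hL : ContDiff ℝ 1 L)
    (hθ : ∀ s ∈ Icc a b, HasDerivAt θ (-gradient L (θ s)) s) :
    ContinuousOn (fun s => gradient L (θ s)) (Icc a b) :=
  hL.continuous_gradient.comp_continuousOn fun s hs => (hθ s hs).continuousAt.continuousWithinAt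

theorem intervalIntegral_norm_gradient_sq_of_gradientFlow (hab : a ≤ b) (hL : ContDiff ℝ 1 L)
    (hθ : ∀ s ∈ Icc a b, HasDerivAt θ (-gradient L (θ s)) s) :
    ∫ s in a..b, ‖gradient L (θ s)‖ ^ 2 = L (θ a) - L (θ b) := by
  have hderiv : ∀ s ∈ uIcc a b, HasDerivAt (L ∘ θ) (-‖gradient L (θ s)‖ ^ 2) s := by
    intro s hs
    rw [uIcc_of_le hab] at hs
    have hgrad := ((hL.differentiable one_ne_zero) (θ s)).hasGradientAt
    simpa [inner_neg_right, real_inner_self_eq_norm_sq] using hgrad.comp_hasDerivAt (hθ s hs)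
  have hint : IntervalIntegrable (fun s => -‖gradient L (θ s)‖ ^ 2) volume a b := by
    refine ContinuousOn.intervalIntegrable ?_
    rw [uIcc_of_le hab]
    exact ((continuousOn_gradient_comp_of_gradientFlow hL hθ).norm.pow 2).neg
  have hftc := integral_eq_sub_of_hasDerivAt hderiv hint
  rw [intervalIntegral.integral_neg] at hftc
  simp only [Function.comp_apply] at hftc
  linarith

theorem norm_sub_le_intervalIntegral_norm_gradient_of_gradientFlow (hab : a ≤ b)
    (hL : ContDiff ℝ 1 L) (hθ : ∀ s ∈ Icc a b, HasDerivAt θ (-gradient L (θ s)) s) :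
    ‖θ b - θ a‖ ≤ ∫ s in a..b, ‖gradient L (θ s)‖ := by
  have hint : IntervalIntegrable (fun s => -gradient L (θ s)) volume a b := by
    refine ContinuousOn.intervalIntegrable ?_
    rw [uIcc_of_le hab]
    exact (continuousOn_gradient_comp_of_gradientFlow hL hθ).neg
  have hftc : ∫ s in a..b, -gradient L (θ s) = θ b - θ a :=
    integral_eq_sub_of_hasDerivAt (fun s hs => hθ s (by rwa [uIcc_of_le hab] at hs)) hint
  rw [← hftc]
  simpa using norm_integral_le_integral_norm (μ := volume) (f := fun s => -gradient L (θ s)) hab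

theorem norm_sub_le_sqrt_mul_sub_of_gradientFlow (hab : a ≤ b) (hL : ContDiff ℝ 1 L)
    (hθ : ∀ s ∈ Icc a b, HasDerivAt θ (-gradient L (θ s)) s) :
    ‖θ b - θ a‖ ≤ √((b - a) * (L (θ a) - L (θ b))) := by
  have hcont : ContinuousOn (fun s => ‖gradient L (θ s)‖) (uIcc a b) := by
    rw [uIcc_of_le hab]
    exact (continuousOn_gradient_comp_of_gradientFlow hL hθ).norm
  calc ‖θ b - θ a‖ ≤ ∫ s in a..b, ‖gradient L (θ s)‖ :=
        norm_sub_le_intervalIntegral_norm_gradient_of_gradientFlow hab hL hθ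
    _ ≤ √((b - a) * ∫ s in a..b, ‖gradient L (θ s)‖ ^ 2) :=
        intervalIntegral_le_sqrt_mul_intervalIntegral_sq hab hcont.intervalIntegrable
          (hcont.pow 2).intervalIntegrable
    _ = √((b - a) * (L (θ a) - L (θ b))) := by
        rw [intervalIntegral_norm_gradient_sq_of_gradientFlow hab hL hθ]

end GradientFlow

/-- Theorem 1 in the form used in the paper: along a gradient flow of `L`, the change of a
`K`-Lipschitz functional `δ` up to time `t` is bounded by `K·√(t·(L(θ 0) − L(θ t)))`, and in
particular by `K·√(t·(L(θ 0) − inf_{s ≥ 0} L(θ s)))` (the available loss decrease). -/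
theorem loss_gap_change_bound
    {E : Type*} [NormedAddCommGroup E] [InnerProductSpace ℝ E] [CompleteSpace E]
    (L : E → ℝ) (hL : ContDiff ℝ 1 L)
    (θ : ℝ → E) (hθ : ∀ t, 0 ≤ t → HasDerivAt θ (-(gradient L (θ t))) t)
    (δ : E → ℝ) (K : ℝ) (hK : 0 ≤ K)
    (hδ : ∀ x y, |δ x - δ y| ≤ K * ‖x - y‖)
    (hbdd : BddBelow (Set.range fun s : {s : ℝ // 0 ≤ s} => L (θ s.1))) :
    ∀ t, 0 ≤ t →
      |δ (θ t) - δ (θ 0)| ≤ K * Real.sqrt (t * (L (θ 0) - L (θ t))) ∧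
        |δ (θ t) - δ (θ 0)|
          ≤ K * Real.sqrt (t * (L (θ 0) - ⨅ s : {s : ℝ // 0 ≤ s}, L (θ s.1))) := by
  intro t ht
  have hmove := norm_sub_le_sqrt_mul_sub_of_gradientFlow ht hL fun s hs => hθ s hs.1
  rw [sub_zero] at hmove
  have hgap : |δ (θ t) - δ (θ 0)| ≤ K * √(t * (L (θ 0) - L (θ t))) :=
    (hδ _ _).trans (mul_le_mul_of_nonneg_left hmove hK)
  have hinf : ⨅ s : {s : ℝ // 0 ≤ s}, L (θ s.1) ≤ L (θ t) := ciInf_le hbdd ⟨t, ht⟩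
  refine ⟨hgap, hgap.trans (mul_le_mul_of_nonneg_left (Real.sqrt_le_sqrt ?_) hK)⟩
  exact mul_le_mul_of_nonneg_left (by linarith) ht
end
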